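/- There is a unique ring endomorphism φ of R whose restriction to A applies the Witt-vector Frobenius of W(k) to coefficients and sends q to q^p (i.e. substitutes q−1 ↦ (1+(q−1))^p − 1), and which satisfies φ(ε) = q^{p−1}·[p]_{q^{p^α}}·ε. Moreover φ is a Frobenius lift: φ(x) − x^p ∈ p·R for every x ∈ R. -/

import Mathlib

open Finset

/-- The q-analogue `[n]_t = ∑_{i=0}^{n-1} t^i`. -/
def qan {A : Type*} [CommRing A] (t : A) (n : ℕ) : A := ∑ i ∈ Finset.range n, t ^ i

/-- `A := W(k)⟦q−1⟧`, the power series ring over the `p`-typical Witt vectors of `k`;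
`q` denotes `1` plus the power series variable. -/
noncomputable def qq (p : ℕ) [Fact p.Prime] (k : Type*) [CommRing k] :
    PowerSeries (WittVector p k) :=
  1 + PowerSeries.X

/-- The distinguished element `d := [p]_{q^{p^α}}` of `A`. -/
noncomputable def dd (p α : ℕ) [Fact p.Prime] (k : Type*) [CommRing k] :
    PowerSeries (WittVector p k) :=
  qan ((qq p k) ^ p ^ α) p

/-- The polynomial `ε² − q·(q^{p^α}−1)·ε` over `A`, whose adjunction defines `R`. -/
noncomputable def relPoly (p α : ℕ) [Fact p.Prime] (k : Type*) [CommRing k] :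
    Polynomial (PowerSeries (WittVector p k)) :=
  Polynomial.X ^ 2 - Polynomial.C (qq p k * ((qq p k) ^ p ^ α - 1)) * Polynomial.X

/-- `R := A[ε]/(ε² − q·(q^{p^α}−1)·ε)`, a free `A`-module with basis `1, ε`. -/
noncomputable abbrev Rring (p α : ℕ) [Fact p.Prime] (k : Type*) [CommRing k] :=
  AdjoinRoot (relPoly p α k)

/-- `ε ∈ R`. -/
noncomputable def eps (p α : ℕ) [Fact p.Prime] (k : Type*) [CommRing k] : Rring p α k :=
  AdjoinRoot.root (relPoly p α k)


/-- The Frobenius lift on `A = W(k)⟦q−1⟧`: it applies the Witt-vector Frobenius of `W(k)`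
to the coefficients and substitutes `q ↦ q^p` (i.e. `X ↦ (1+X)^p − 1` for the variable
`X = q − 1`).  The coefficient of `X^m` is given by the (finite) coefficientwise
substitution formula, valid since `(1+X)^p − 1` has zero constant term. -/
noncomputable def frobSubst (p : ℕ) [Fact p.Prime] (k : Type*) [CommRing k]
    (f : PowerSeries (WittVector p k)) : PowerSeries (WittVector p k) :=
  PowerSeries.mk fun m =>
    ∑ n ∈ Finset.range (m + 1),
      WittVector.frobenius (PowerSeries.coeff n f) *
        PowerSeries.coeff m ((qq p k ^ p - 1) ^ n)

/-! For a ring endomorphism `Φ`, the elements `x` with `p ∣ Φ x - x^p` form a subring. For the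
substitution `Φ` on `A` it contains the constants (`F` lifts Frobenius on `W(k)`) and `X` (since
`(1 + X)^p - 1 ≡ X^p`), hence all polynomials; as the coefficient of `X^m` on both sides only
depends on the truncation of `x` in degree `≤ m`, it is all of `A`.

In `R = A[ε]` we have `ε² = r ε` with `r = q (q^{p^α} - 1)`, so `ε ↦ c ε` extends `Φ` (uniquely)
as soon as `Φ r = c r`; for `c = q^{p-1} [p]_{q^{p^α}}` this is `[p]_t (t - 1) = t^p - 1`. The
extension is again a Frobenius lift, because `ε^p = r^{p-1} ε` and `[p]_t ≡ (t - 1)^{p-1} mod p`. -/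

section FrobeniusLiftLocus

variable (p : ℕ) [hp : Fact p.Prime] {S : Type*} [CommRing S]

def frobeniusLiftLocus (φ : S →+* S) : Subring S where
  carrier := {x | (p : S) ∣ φ x - x ^ p}
  zero_mem' := by simp [hp.out.ne_zero]
  one_mem' := by simp
  add_mem' := by
    rintro x y (hx : (p : S) ∣ φ x - x ^ p) (hy : (p : S) ∣ φ y - y ^ p)
    obtain ⟨r, hr⟩ := exists_add_pow_prime_eq hp.out x y
    have h : φ (x + y) - (x + y) ^ p = (φ x - x ^ p) + (φ y - y ^ p) - p * (x * y * r) := by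
      rw [map_add, hr]; ring
    rw [Set.mem_ofPred_eq, h]
    exact dvd_sub (dvd_add hx hy) (dvd_mul_right _ _)
  mul_mem' := by
    rintro x y (hx : (p : S) ∣ φ x - x ^ p) (hy : (p : S) ∣ φ y - y ^ p)
    have h : φ (x * y) - (x * y) ^ p = φ x * (φ y - y ^ p) + y ^ p * (φ x - x ^ p) := by
      rw [map_mul]; ring
    rw [Set.mem_ofPred_eq, h]
    exact dvd_add (dvd_mul_of_dvd_right hy _) (dvd_mul_of_dvd_right hx _)
  neg_mem' := by
    rintro x (hx : (p : S) ∣ φ x - x ^ p)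
    obtain ⟨r, hr⟩ := exists_add_pow_prime_eq hp.out x (-x)
    rw [add_neg_cancel, zero_pow hp.out.ne_zero] at hr
    have h : φ (-x) - (-x) ^ p = -(φ x - x ^ p) + p * (x * -x * r) := by
      rw [map_neg]; linear_combination hr
    rw [Set.mem_ofPred_eq, h]
    exact dvd_add (dvd_neg.mpr hx) (dvd_mul_right _ _)

variable {p} in
theorem mem_frobeniusLiftLocus {φ : S →+* S} {x : S} :
    x ∈ frobeniusLiftLocus p φ ↔ (p : S) ∣ φ x - x ^ p :=
  Iff.rfl

theorem mem_frobeniusLiftLocus_of_mem_adjoin {B : Type*} [CommRing B] [Algebra B S]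
    {φ : S →+* S} {s : Set S} (halg : ∀ b, algebraMap B S b ∈ frobeniusLiftLocus p φ)
    (hs : ∀ x ∈ s, x ∈ frobeniusLiftLocus p φ) {x : S} (hx : x ∈ Algebra.adjoin B s) :
    x ∈ frobeniusLiftLocus p φ :=
  Algebra.adjoin_induction hs halg (fun _ _ _ _ ↦ add_mem) (fun _ _ _ _ ↦ mul_mem) hx

theorem natCast_dvd_geom_sum_sub_sub_one_pow (t : S) :
    (p : S) ∣ ∑ i ∈ range p, t ^ i - (t - 1) ^ (p - 1) := by
  have hmodp : (∑ i ∈ range p, Polynomial.X ^ i : Polynomial (ZMod p)) =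
      (Polynomial.X - 1) ^ (p - 1) := by
    refine mul_right_cancel₀ (by simpa using Polynomial.X_sub_C_ne_zero (1 : ZMod p)) ?_
    rw [geom_sum_mul, ← pow_succ, Nat.sub_add_cancel hp.out.one_le, sub_pow_char, one_pow]
  have hint : Polynomial.C (p : ℤ) ∣
      ∑ i ∈ range p, Polynomial.X ^ i - (Polynomial.X - 1) ^ (p - 1) := by
    rw [← Ideal.mem_span_singleton, ← Set.image_singleton, ← Ideal.map_span,
      ← ZMod.ker_intCastRingHom, ← Polynomial.ker_mapRingHom, RingHom.mem_ker]
    simp [Polynomial.map_sum, hmodp]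
  simpa using map_dvd (Polynomial.aeval t) hint

end FrobeniusLiftLocus

namespace PowerSeries

variable {B : Type*} [CommRing B]

theorem C_dvd_of_forall_dvd_coeff {c : B} {f : B⟦X⟧} (h : ∀ n, c ∣ coeff n f) : C c ∣ f :=
  ⟨mk fun n ↦ (h n).choose, ext fun n ↦ by rw [coeff_C_mul, coeff_mk, ← (h n).choose_spec]⟩

variable (σ : B →+* B) {g : B⟦X⟧} (hg : constantCoeff g = 0)

noncomputable def mapSubst : B⟦X⟧ →+* B⟦X⟧ :=
  (substAlgHom (HasSubst.of_constantCoeff_zero' hg)).toRingHom.comp (map σ)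

theorem mapSubst_C (b : B) : mapSubst σ hg (C b) = C (σ b) := by
  simpa [mapSubst] using (substAlgHom (HasSubst.of_constantCoeff_zero' hg)).commutes (σ b)

theorem mapSubst_X : mapSubst σ hg X = g := by
  simp [mapSubst, coe_substAlgHom, subst_X (HasSubst.of_constantCoeff_zero' hg)]

theorem X_pow_dvd_mapSubst {N : ℕ} {f : B⟦X⟧} (h : X ^ N ∣ f) : X ^ N ∣ mapSubst σ hg f := by
  obtain ⟨u, rfl⟩ := h
  rw [map_mul, map_pow, mapSubst_X]
  exact dvd_mul_of_dvd_left (pow_dvd_pow_of_dvd (X_dvd_iff.mpr hg) N) _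

theorem coeff_mapSubst (f : B⟦X⟧) (m : ℕ) :
    coeff m (mapSubst σ hg f) = ∑ n ∈ range (m + 1), σ (coeff n f) * coeff m (g ^ n) := by
  rw [mapSubst, RingHom.comp_apply, AlgHom.toRingHom_eq_coe, AlgHom.coe_toRingHom,
    coe_substAlgHom, coeff_subst' (HasSubst.of_constantCoeff_zero' hg)]
  refine finsum_eq_sum_of_support_subset _ fun n hn ↦ ?_
  by_contra hnm
  refine hn ?_
  have hmn : m < n := by simpa using hnm
  simp [X_pow_dvd_iff.mp (pow_dvd_pow_of_dvd (X_dvd_iff.mpr hg) n) m hmn]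

variable {σ} (p : ℕ) [Fact p.Prime]

theorem coe_mem_frobeniusLiftLocus_mapSubst (hσ : ∀ b, (p : B) ∣ σ b - b ^ p)
    (hgp : (p : B⟦X⟧) ∣ g - X ^ p) (t : Polynomial B) :
    (t : B⟦X⟧) ∈ frobeniusLiftLocus p (mapSubst σ hg) := by
  refine mem_frobeniusLiftLocus_of_mem_adjoin p (B := B) (s := {X}) (fun b ↦ ?_) ?_ ?_
  · obtain ⟨c, hc⟩ := hσ b
    refine ⟨C c, ?_⟩
    rw [algebraMap_eq, mapSubst_C, ← map_pow, ← map_sub, hc, map_mul, map_natCast]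
  · simpa [mem_frobeniusLiftLocus, mapSubst_X] using hgp
  · rw [← Polynomial.eval₂_C_X_eq_coe, ← algebraMap_eq, ← Polynomial.aeval_def]
    exact Polynomial.aeval_mem_adjoin_singleton B X

theorem natCast_dvd_mapSubst_sub_pow (hσ : ∀ b, (p : B) ∣ σ b - b ^ p)
    (hgp : (p : B⟦X⟧) ∣ g - X ^ p) (f : B⟦X⟧) : (p : B⟦X⟧) ∣ mapSubst σ hg f - f ^ p := by
  rw [← map_natCast C]
  refine C_dvd_of_forall_dvd_coeff fun m ↦ ?_
  set t : B⟦X⟧ := ↑(trunc (m + 1) f)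
  have hft : X ^ (m + 1) ∣ f - t :=
    X_pow_dvd_iff.mpr fun n hn ↦ by simp [t, coeff_trunc, hn]
  have hdiff : X ^ (m + 1) ∣ (mapSubst σ hg f - f ^ p) - (mapSubst σ hg t - t ^ p) := by
    rw [show (mapSubst σ hg f - f ^ p) - (mapSubst σ hg t - t ^ p)
      = mapSubst σ hg (f - t) - (f ^ p - t ^ p) by rw [map_sub]; ring]
    exact dvd_sub (X_pow_dvd_mapSubst σ hg hft) (hft.trans (sub_dvd_pow_sub_pow _ _ _))
  obtain ⟨u, hu⟩ := coe_mem_frobeniusLiftLocus_mapSubst hg p hσ hgp (trunc (m + 1) f)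
  have hcoeff := X_pow_dvd_iff.mp hdiff m (lt_add_one m)
  rw [map_sub, sub_eq_zero, hu, ← map_natCast C, coeff_C_mul] at hcoeff
  rw [hcoeff]
  exact dvd_mul_right _ _

end PowerSeries

theorem WittVector.natCast_dvd_frobenius_sub_pow {p : ℕ} [Fact p.Prime] {k : Type*} [CommRing k]
    [CharP k p] [PerfectRing k p] (a : WittVector p k) :
    (p : WittVector p k) ∣ frobenius a - a ^ p := by
  rw [← Ideal.mem_span_singleton, mem_span_p_iff_coeff_zero_eq_zero, ← constantCoeff_apply,
    map_sub, map_pow, constantCoeff_apply, constantCoeff_apply, coeff_frobenius_charP, sub_self]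

section QuadraticExtension

open Polynomial AdjoinRoot

variable {A : Type*} [CommRing A] (r : A)

theorem AdjoinRoot.root_sq_of_X_sq_sub_C_mul_X :
    root (X ^ 2 - C r * X) ^ 2 = of (X ^ 2 - C r * X) r * root (X ^ 2 - C r * X) := by
  have h := eval₂_root (X ^ 2 - C r * X)
  rwa [eval₂_sub, eval₂_mul, eval₂_X_pow, eval₂_C, eval₂_X, sub_eq_zero] at h

theorem AdjoinRoot.root_pow_succ_of_X_sq_sub_C_mul_X (n : ℕ) :
    root (X ^ 2 - C r * X) ^ (n + 1) = of (X ^ 2 - C r * X) r ^ n * root (X ^ 2 - C r * X) := by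
  induction n with
  | zero => simp
  | succ n ih =>
    rw [pow_succ (root _) (n + 1), ih]
    linear_combination of _ r ^ n * root_sq_of_X_sq_sub_C_mul_X r

theorem AdjoinRoot.existsUnique_ringHom_of_X_sq_sub_C_mul_X (Φ : A →+* A) {c : A}
    (hc : Φ r = c * r) :
    ∃! φ : AdjoinRoot (X ^ 2 - C r * X) →+* AdjoinRoot (X ^ 2 - C r * X),
      (∀ a, φ (algebraMap _ _ a) = algebraMap _ _ (Φ a)) ∧
      φ (root _) = algebraMap _ _ c * root _ := by
  have hroot : (X ^ 2 - C r * X).eval₂ ((of _).comp Φ) (of _ c * root (X ^ 2 - C r * X)) = 0 := by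
    simp only [eval₂_sub, eval₂_mul, eval₂_X_pow, eval₂_C, eval₂_X, RingHom.comp_apply, hc,
      map_mul]
    linear_combination (of _ c) ^ 2 * root_sq_of_X_sq_sub_C_mul_X r
  refine ⟨lift _ _ hroot, ⟨fun a ↦ lift_of hroot, lift_root hroot⟩, ?_⟩
  rintro ψ ⟨hψ, hψroot⟩
  refine ringHom_ext (RingHom.ext fun a ↦ ?_) ?_
  · simpa [lift_of] using hψ a
  · rw [hψroot, lift_root]
    rfl

theorem AdjoinRoot.natCast_dvd_sub_pow_of_X_sq_sub_C_mul_X (p : ℕ) [hp : Fact p.Prime]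
    {Φ : A →+* A} (hΦ : ∀ a, (p : A) ∣ Φ a - a ^ p) {c : A} (hc : (p : A) ∣ c - r ^ (p - 1))
    {φ : AdjoinRoot (X ^ 2 - C r * X) →+* AdjoinRoot (X ^ 2 - C r * X)}
    (hφ : ∀ a, φ (algebraMap _ _ a) = algebraMap _ _ (Φ a))
    (hφroot : φ (root _) = algebraMap _ _ c * root _) (x : AdjoinRoot (X ^ 2 - C r * X)) :
    (p : AdjoinRoot (X ^ 2 - C r * X)) ∣ φ x - x ^ p := by
  refine mem_frobeniusLiftLocus_of_mem_adjoin p (B := A) (s := {root _}) (fun a ↦ ?_) ?_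
    (by rw [adjoinRoot_eq_top]; exact Algebra.mem_top)
  · rw [mem_frobeniusLiftLocus, hφ, ← map_pow, ← map_sub]
    simpa only [map_natCast] using _root_.map_dvd (algebraMap A _) (hΦ a)
  · rintro _ rfl
    have hpow := root_pow_succ_of_X_sq_sub_C_mul_X r (p - 1)
    rw [Nat.sub_add_cancel hp.out.one_le] at hpow
    rw [mem_frobeniusLiftLocus, hφroot, hpow, algebraMap_eq, ← map_pow, ← sub_mul, ← map_sub]
    exact dvd_mul_of_dvd_left (by simpa using _root_.map_dvd (of _) hc) _

end QuadraticExtension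

section FrobeniusOnA

open PowerSeries

variable (p : ℕ) [hp : Fact p.Prime] (α : ℕ) (k : Type*) [CommRing k]

theorem constantCoeff_qq_pow_sub_one : constantCoeff (qq p k ^ p - 1) = 0 := by
  simp [qq]

theorem coe_mapSubst_frobenius :
    ⇑(mapSubst WittVector.frobenius (constantCoeff_qq_pow_sub_one p k)) = frobSubst p k := by
  funext f
  ext m
  simp [coeff_mapSubst, frobSubst]

theorem natCast_dvd_qq_pow_sub_one_sub_X_pow :
    (p : PowerSeries (WittVector p k)) ∣ (qq p k ^ p - 1) - X ^ p := by
  obtain ⟨r, hr⟩ := exists_add_pow_prime_eq hp.out 1 (X : PowerSeries (WittVector p k))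
  rw [qq, hr]
  exact ⟨X * r, by ring⟩

theorem mapSubst_qq_mul_qq_pow_sub_one (σ : WittVector p k →+* WittVector p k) :
    mapSubst σ (constantCoeff_qq_pow_sub_one p k) (qq p k * (qq p k ^ p ^ α - 1)) =
      qq p k ^ (p - 1) * dd p α k * (qq p k * (qq p k ^ p ^ α - 1)) := by
  have hqq : mapSubst σ (constantCoeff_qq_pow_sub_one p k) (qq p k) = qq p k ^ p :=
    calc mapSubst σ _ (1 + X) = 1 + mapSubst σ _ X := by rw [map_add, map_one]
      _ = qq p k ^ p := by rw [mapSubst_X, add_sub_cancel]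
  have hq : qq p k ^ (p - 1) * qq p k = qq p k ^ p := by
    rw [← pow_succ, Nat.sub_add_cancel hp.out.one_le]
  have hgeom := geom_sum_mul (qq p k ^ p ^ α) p
  rw [map_mul, map_sub, map_pow, map_one, hqq, dd, qan]
  linear_combination -((∑ i ∈ range p, (qq p k ^ p ^ α) ^ i) * (qq p k ^ p ^ α - 1)) * hq
    - qq p k ^ p * hgeom

theorem natCast_dvd_qq_pow_mul_dd_sub_pow :
    (p : PowerSeries (WittVector p k)) ∣
      qq p k ^ (p - 1) * dd p α k - (qq p k * (qq p k ^ p ^ α - 1)) ^ (p - 1) := by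
  rw [mul_pow, ← mul_sub]
  exact dvd_mul_of_dvd_right (natCast_dvd_geom_sum_sub_sub_one_pow p _) _

end FrobeniusOnA

theorem stmt3 (p : ℕ) [Fact p.Prime] (α : ℕ)
    (k : Type*) [Field k] [CharP k p] [PerfectRing k p] :
    (∃! φ : Rring p α k →+* Rring p α k,
      (∀ a : PowerSeries (WittVector p k),
        φ (algebraMap _ _ a) = algebraMap _ _ (frobSubst p k a)) ∧
      φ (eps p α k) = algebraMap _ _ ((qq p k) ^ (p - 1) * dd p α k) * eps p α k) ∧
    (∀ φ : Rring p α k →+* Rring p α k,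
      ((∀ a : PowerSeries (WittVector p k),
        φ (algebraMap _ _ a) = algebraMap _ _ (frobSubst p k a)) ∧
      φ (eps p α k) = algebraMap _ _ ((qq p k) ^ (p - 1) * dd p α k) * eps p α k) →
      ∀ x : Rring p α k, φ x - x ^ p ∈ Ideal.span {(p : Rring p α k)}) := by
  rw [← coe_mapSubst_frobenius]
  refine ⟨AdjoinRoot.existsUnique_ringHom_of_X_sq_sub_C_mul_X _ _
    (mapSubst_qq_mul_qq_pow_sub_one p α k _), fun φ ⟨hφ, hφroot⟩ x ↦ ?_⟩
  have hΦ := PowerSeries.natCast_dvd_mapSubst_sub_pow (constantCoeff_qq_pow_sub_one p k) p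
    WittVector.natCast_dvd_frobenius_sub_pow
    (natCast_dvd_qq_pow_sub_one_sub_X_pow p k)
  exact Ideal.mem_span_singleton.mpr <| AdjoinRoot.natCast_dvd_sub_pow_of_X_sq_sub_C_mul_X _ p
    hΦ (natCast_dvd_qq_pow_mul_dd_sub_pow p α k) hφ hφroot x
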